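/- Let (n_k) be a sequence of positive integers with 2^{k-1} ≤ n_k < 2^k for each k ≥ 1. Let l ≥ 0 and m ≥ l+1 be integers, let p_k be a real linear combination of Walsh functions w_0,...,w_{2^l - 1} for k = l+1,...,m, and set f(x) = Σ_{k=l+1}^m p_k(x) w_{n_k}(x). Then ‖f‖_∞ ≥ Σ_{k=l+1}^m ‖p_k‖_1, where norms are taken over [0,1]. -/

import Mathlib

/-
Discretise at level `m`: on each dyadic interval of length `2⁻ᵐ` every `p_k` and `w_{n_k}` is
constant, `p_k` only depends on the first `l` binary digits of the interval, and `w_{n_k}` is a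
character of the dyadic group whose top frequency digit sits at position `k - 1 ≥ l`. Hence every
nonempty product of the `w_{n_k}` is orthogonal to all functions of the first `l` digits. With
`ε_k = sign p_k`, the Riesz product `G = ∏ₖ (1 + ε_k w_{n_k})` is nonnegative with `∫ G = 1`, and
`∫ G f = Σₖ ∫ |p_k|`; so `Σₖ ‖p_k‖₁ = ∫ G f ≤ ‖f‖_∞ ∫ G = ‖f‖_∞`.
-/

open Real MeasureTheory

/-- L¹ norm of `f` on `(0,1)`. -/
noncomputable def l1Norm01 (f : ℝ → ℝ) : ℝ := ∫ x in (0:ℝ)..1, |f x|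

/-- Essential supremum of `|f|` on `[0,1]`. -/
noncomputable def essSupNorm01 (f : ℝ → ℝ) : ℝ :=
  essSup (fun x => |f x|) (volume.restrict (Set.Icc (0:ℝ) 1))

/-- The `n`-th Rademacher function. -/
noncomputable def rademacher (n : ℕ) (x : ℝ) : ℝ := Real.sign (Real.sin (2^n * π * x))

/-- The `n`-th Walsh function. -/
noncomputable def walsh (n : ℕ) (x : ℝ) : ℝ :=
  ∏ k ∈ Finset.range (n+1), if Nat.testBit n k then rademacher (k+1) x else 1

open Finset

section RieszProduct

variable {α β ι : Type*} [DecidableEq ι] {s : Finset α} {K : Finset ι} {χ : ι → α → ℝ}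
  {q : α → β}

theorem sum_mul_prod_mul_prod_one_add_eq
    (horth : ∀ U ⊆ K, U.Nonempty → ∀ c : β → ℝ, ∑ i ∈ s, c (q i) * ∏ j ∈ U, χ j i = 0)
    (e : ι → β → ℝ) {T : Finset ι} (hT : T ⊆ K) {U : Finset ι} (hU : U ⊆ K)
    (hTU : Disjoint T U) (c : β → ℝ) :
    ∑ i ∈ s, c (q i) * (∏ j ∈ U, χ j i) * ∏ j ∈ T, (1 + e j (q i) * χ j i) =
      ∑ i ∈ s, c (q i) * ∏ j ∈ U, χ j i := by
  induction T using Finset.induction_on generalizing U c with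
  | empty => simp
  | insert a T ha ih =>
    rw [insert_subset_iff] at hT
    rw [disjoint_insert_left] at hTU
    have hU' : insert a U ⊆ K := insert_subset hT.1 hU
    have hTU' : Disjoint T (insert a U) := disjoint_insert_right.2 ⟨ha, hTU.2⟩
    have hnew := ih hT.2 hU' hTU' (fun b => c b * e a b)
    have hzero := horth _ hU' (insert_nonempty a U) (fun b => c b * e a b)
    beta_reduce at hnew hzero
    rw [hzero] at hnew
    calc ∑ i ∈ s, c (q i) * (∏ j ∈ U, χ j i) * ∏ j ∈ insert a T, (1 + e j (q i) * χ j i)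
        = ∑ i ∈ s, c (q i) * (∏ j ∈ U, χ j i) * ∏ j ∈ T, (1 + e j (q i) * χ j i) +
          ∑ i ∈ s, c (q i) * e a (q i) * (∏ j ∈ insert a U, χ j i) *
            ∏ j ∈ T, (1 + e j (q i) * χ j i) := by
          rw [← sum_add_distrib]
          refine sum_congr rfl fun i _ => ?_
          rw [prod_insert ha, prod_insert hTU.1]
          ring
      _ = ∑ i ∈ s, c (q i) * ∏ j ∈ U, χ j i := by rw [hnew, ih hT.2 hU hTU.2, add_zero]

theorem sum_sum_abs_le_card_mul_of_orthogonal (hχ : ∀ k ∈ K, ∀ i ∈ s, |χ k i| = 1)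
    (horth : ∀ U ⊆ K, U.Nonempty → ∀ c : β → ℝ, ∑ i ∈ s, c (q i) * ∏ j ∈ U, χ j i = 0)
    (Q : ι → β → ℝ) {M : ℝ} (hM : ∀ i ∈ s, |∑ k ∈ K, Q k (q i) * χ k i| ≤ M) :
    ∑ k ∈ K, ∑ i ∈ s, |Q k (q i)| ≤ #s * M := by
  set ε : ι → β → ℝ := fun k b => SignType.sign (Q k b)
  set G : α → ℝ := fun i => ∏ k ∈ K, (1 + ε k (q i) * χ k i)
  have hG_nonneg : ∀ i ∈ s, 0 ≤ G i := fun i hi => prod_nonneg fun k hk => by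
    have : |ε k (q i) * χ k i| ≤ 1 := by
      rw [abs_mul, hχ k hk i hi, mul_one]
      dsimp only [ε]
      generalize SignType.sign (Q k (q i)) = t
      cases t <;> simp [SignType.cast]
    linarith [neg_abs_le (ε k (q i) * χ k i)]
  have hG_sum : ∑ i ∈ s, G i = #s := by
    simpa using sum_mul_prod_mul_prod_one_add_eq horth ε subset_rfl (empty_subset K)
      (disjoint_empty_right K) 1
  have hG_mul : ∀ k ∈ K, ∑ i ∈ s, G i * (Q k (q i) * χ k i) = ∑ i ∈ s, |Q k (q i)| := by
    intro k hk
    have hsplit : ∀ i ∈ s, G i * (Q k (q i) * χ k i) =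
        |Q k (q i)| * ∏ j ∈ K.erase k, (1 + ε j (q i) * χ j i) +
          Q k (q i) * (∏ j ∈ {k}, χ j i) * ∏ j ∈ K.erase k, (1 + ε j (q i) * χ j i) := by
      intro i hi
      have hχχ : χ k i * χ k i = 1 := by rw [← abs_mul_abs_self, hχ k hk i hi, one_mul]
      dsimp only [G]
      rw [← mul_prod_erase K _ hk, prod_singleton, ← sign_mul_self (Q k (q i))]
      linear_combination (ε k (q i) * Q k (q i) * ∏ j ∈ K.erase k, (1 + ε j (q i) * χ j i)) * hχχ
    have h_single := sum_mul_prod_mul_prod_one_add_eq horth ε (erase_subset k K)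
      (singleton_subset_iff.2 hk) (disjoint_singleton_right.2 (notMem_erase k K)) (Q k)
    have h_empty := sum_mul_prod_mul_prod_one_add_eq horth ε (erase_subset k K) (empty_subset K)
      (disjoint_empty_right _) (fun b => |Q k b|)
    rw [horth _ (singleton_subset_iff.2 hk) (singleton_nonempty k)] at h_single
    simp only [prod_empty, mul_one] at h_empty
    rw [sum_congr rfl hsplit, sum_add_distrib, h_single, h_empty, add_zero]
  calc ∑ k ∈ K, ∑ i ∈ s, |Q k (q i)|
      = ∑ k ∈ K, ∑ i ∈ s, G i * (Q k (q i) * χ k i) :=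
        sum_congr rfl fun k hk => (hG_mul k hk).symm
    _ = ∑ i ∈ s, G i * ∑ k ∈ K, Q k (q i) * χ k i := by simp_rw [mul_sum]; exact sum_comm
    _ ≤ ∑ i ∈ s, G i * M := sum_le_sum fun i hi =>
        mul_le_mul_of_nonneg_left ((le_abs_self _).trans (hM i hi)) (hG_nonneg i hi)
    _ = #s * M := by rw [← sum_mul, hG_sum]

end RieszProduct

def dyadicInterval (m i : ℕ) : Set ℝ := Set.Ioo ((i : ℝ) / 2 ^ m) (((i : ℝ) + 1) / 2 ^ m)

theorem dyadicInterval_subset_Icc {m i : ℕ} (hi : i < 2 ^ m) :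
    dyadicInterval m i ⊆ Set.Icc 0 1 := by
  have hi' : (i : ℝ) + 1 ≤ 2 ^ m := by exact_mod_cast hi
  refine Set.Ioo_subset_Icc_self.trans (Set.Icc_subset_Icc (by positivity) ?_)
  rwa [div_le_one (by positivity)]

theorem volume_dyadicInterval (m i : ℕ) :
    volume (dyadicInterval m i) = ENNReal.ofReal (1 / 2 ^ m) := by
  rw [dyadicInterval, Real.volume_Ioo]
  congr 1
  ring

theorem mem_dyadicInterval_div {l m i : ℕ} (hlm : l ≤ m) {x : ℝ} (hx : x ∈ dyadicInterval m i) :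
    x ∈ dyadicInterval l (i / 2 ^ (m - l)) := by
  set d := 2 ^ (m - l)
  have hd : 0 < d := Nat.two_pow_pos _
  have hpow : (2 : ℝ) ^ m = 2 ^ l * d := by
    rw [Nat.cast_pow, Nat.cast_two, ← pow_add, Nat.add_sub_cancel' hlm]
  have hlo : (i / d : ℕ) * (d : ℝ) ≤ i := by exact_mod_cast Nat.div_mul_le_self i d
  have hhi : (i : ℝ) + 1 ≤ ((i / d : ℕ) + 1) * d := by
    exact_mod_cast (Nat.lt_div_mul_add (a := i) hd).trans_eq (by ring)
  obtain ⟨hx1, hx2⟩ := hx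
  rw [hpow] at hx1 hx2
  constructor
  · calc ((i / d : ℕ) : ℝ) / 2 ^ l = (i / d : ℕ) * (d : ℝ) / (2 ^ l * d) := by field_simp
      _ ≤ i / (2 ^ l * d) := by gcongr
      _ < x := hx1
  · calc x < ((i : ℝ) + 1) / (2 ^ l * d) := hx2
      _ ≤ ((i / d : ℕ) + 1) * (d : ℝ) / (2 ^ l * d) := by gcongr
      _ = (((i / d : ℕ) : ℝ) + 1) / 2 ^ l := by field_simp

theorem rademacher_eq_neg_one_pow {j i : ℕ} {x : ℝ} (hx : x ∈ dyadicInterval j i) :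
    rademacher j x = (-1) ^ i := by
  obtain ⟨hx1, hx2⟩ := hx
  rw [div_lt_iff₀ (by positivity)] at hx1
  rw [lt_div_iff₀ (by positivity)] at hx2
  have hsin : 0 < Real.sin (π * (x * 2 ^ j - i)) :=
    Real.sin_pos_of_pos_of_lt_pi (by nlinarith [pi_pos]) (by nlinarith [pi_pos])
  have harg : 2 ^ j * π * x = π * (x * 2 ^ j - i) + (i : ℤ) * π := by push_cast; ring
  rw [rademacher, harg, Real.sin_add_int_mul_pi, zpow_natCast]
  rcases neg_one_pow_eq_or ℝ i with h | h <;> rw [h]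
  · simpa using Real.sign_of_pos hsin
  · simpa using Real.sign_of_neg (neg_neg_of_pos hsin)

theorem neg_one_pow_div_two_pow (i s : ℕ) :
    (-1 : ℝ) ^ (i / 2 ^ s) = if i.testBit s then -1 else 1 := by
  rw [neg_one_pow_eq_pow_mod_two, Nat.testBit_eq_decide_div_mod_eq]
  rcases Nat.mod_two_eq_zero_or_one (i / 2 ^ s) with h | h <;> simp [h]

theorem rademacher_eq_of_mem_dyadicInterval {j m i : ℕ} (hjm : j ≤ m) {x : ℝ}
    (hx : x ∈ dyadicInterval m i) : rademacher j x = if i.testBit (m - j) then -1 else 1 := by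
  rw [rademacher_eq_neg_one_pow (mem_dyadicInterval_div hjm hx), neg_one_pow_div_two_pow]

theorem prod_range_testBit_eq {M : Type*} [CommMonoid M] (f : ℕ → M) {n r s : ℕ}
    (hn : n < 2 ^ r) (hrs : r ≤ s) :
    ∏ k ∈ range s, (if n.testBit k then f k else 1) =
      ∏ k ∈ range r, if n.testBit k then f k else 1 := by
  refine (prod_subset (range_subset_range.2 hrs) fun k _ hk => ?_).symm
  rw [Nat.testBit_lt_two_pow (hn.trans_le (Nat.pow_le_pow_right two_pos (by simpa using hk))),
    if_neg Bool.false_ne_true]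

theorem walsh_eq_prod_range {n m : ℕ} (hn : n < 2 ^ m) (x : ℝ) :
    walsh n x = ∏ k ∈ range m, if n.testBit k then rademacher (k + 1) x else 1 := by
  have hmin : n < 2 ^ min (n + 1) m := by
    rcases min_choice (n + 1) m with h | h <;> rw [h]
    · exact Nat.lt_two_pow_self.trans (Nat.pow_lt_pow_right one_lt_two n.lt_succ_self)
    · exact hn
  rw [walsh, prod_range_testBit_eq _ hmin (min_le_left _ _),
    prod_range_testBit_eq _ hmin (min_le_right _ _)]

theorem abs_walsh_le_one (n : ℕ) (x : ℝ) : |walsh n x| ≤ 1 := by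
  rw [walsh, abs_prod]
  refine prod_le_one (fun _ _ => abs_nonneg _) fun k _ => ?_
  split
  · rcases Real.sign_apply_eq (Real.sin (2 ^ (k + 1) * π * x)) with h | h | h <;>
      simp [rademacher, h]
  · simp

theorem abs_sum_mul_walsh_le {ι : Type*} (s : Finset ι) (a : ι → ℝ) (ν : ι → ℕ) (x : ℝ) :
    |∑ j ∈ s, a j * walsh (ν j) x| ≤ ∑ j ∈ s, |a j| :=
  (abs_sum_le_sum_abs _ _).trans <| sum_le_sum fun j _ => by
    rw [abs_mul]
    exact mul_le_of_le_one_right (abs_nonneg _) (abs_walsh_le_one _ _)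

/-- The value of `walsh n` on `dyadicInterval m i` when `n < 2 ^ m`: there `r_{k+1}` is `-1`
exactly when the binary digit of `i` at position `m - 1 - k` is `1`. -/
def dyadicWalsh (m n i : ℕ) : ℝ :=
  ∏ k ∈ range m, if n.testBit k && i.testBit (m - 1 - k) then -1 else 1

theorem walsh_eq_dyadicWalsh {m n i : ℕ} (hn : n < 2 ^ m) {x : ℝ}
    (hx : x ∈ dyadicInterval m i) : walsh n x = dyadicWalsh m n i := by
  rw [walsh_eq_prod_range hn, dyadicWalsh]
  refine prod_congr rfl fun k hk => ?_
  rw [rademacher_eq_of_mem_dyadicInterval (mem_range.1 hk) hx,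
    show m - (k + 1) = m - 1 - k by omega]
  cases n.testBit k <;> simp

theorem sum_mul_walsh_eq_of_mem_dyadicInterval {l m i : ℕ} (hlm : l ≤ m) (a : ℕ → ℝ) {x : ℝ}
    (hx : x ∈ dyadicInterval m i) :
    ∑ j ∈ range (2 ^ l), a j * walsh j x =
      ∑ j ∈ range (2 ^ l), a j * dyadicWalsh l j (i / 2 ^ (m - l)) :=
  sum_congr rfl fun j hj => by
    rw [walsh_eq_dyadicWalsh (mem_range.1 hj) (mem_dyadicInterval_div hlm hx)]

theorem abs_dyadicWalsh (m n i : ℕ) : |dyadicWalsh m n i| = 1 := by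
  rw [dyadicWalsh, abs_prod]
  exact prod_eq_one fun k _ => by split <;> simp

theorem dyadicWalsh_xor_two_pow {m t : ℕ} (ht : t < m) (n i : ℕ) :
    dyadicWalsh m n (i ^^^ 2 ^ (m - 1 - t)) =
      (if n.testBit t then -1 else 1) * dyadicWalsh m n i := by
  have hflip : ∀ k < m, (i ^^^ 2 ^ (m - 1 - t)).testBit (m - 1 - k) =
      (i.testBit (m - 1 - k) ^^ decide (k = t)) := fun k hk => by
    rw [Nat.testBit_xor, Nat.testBit_two_pow]
    congr 2
    apply propext
    omega
  rw [dyadicWalsh, dyadicWalsh, ← mul_prod_erase _ _ (mem_range.2 ht),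
    ← mul_prod_erase _ _ (mem_range.2 ht), ← mul_assoc]
  congr 1
  · rw [hflip t ht]
    cases n.testBit t <;> cases i.testBit (m - 1 - t) <;> norm_num
  · refine prod_congr rfl fun k hk => ?_
    rw [hflip k (mem_range.1 (mem_of_mem_erase hk)), decide_eq_false (ne_of_mem_erase hk),
      Bool.xor_false]

theorem Nat.xor_two_pow_div_two_pow {s d : ℕ} (h : s < d) (i : ℕ) :
    (i ^^^ 2 ^ s) / 2 ^ d = i / 2 ^ d := by
  rw [Nat.xor_div_two_pow, Nat.div_eq_of_lt (Nat.pow_lt_pow_right one_lt_two h), Nat.xor_zero]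

theorem sum_mul_prod_dyadicWalsh_eq_zero {n : ℕ → ℕ} {l m : ℕ} {U : Finset ℕ}
    (hn : ∀ k ∈ U, 2 ^ (k - 1) ≤ n k ∧ n k < 2 ^ k) (hU : U ⊆ Icc (l + 1) m)
    (hne : U.Nonempty) (c : ℕ → ℝ) :
    ∑ i ∈ range (2 ^ m), c (i / 2 ^ (m - l)) * ∏ k ∈ U, dyadicWalsh m (n k) i = 0 := by
  set t := U.max' hne
  have ht : t ∈ U := U.max'_mem hne
  have htlm := mem_Icc.1 (hU ht)
  -- Flipping the binary digit of `i` at position `m - t`, which `c (i / 2 ^ (m - l))` does not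
  -- see, changes the sign of `w_{n_t}` and of no other `w_{n_k}` with `k ∈ U`.
  have hsign : ∀ k ∈ U,
      (if (n k).testBit (t - 1) then (-1 : ℝ) else 1) = if k = t then -1 else 1 := by
    intro k hk
    obtain ⟨hk1, hk2⟩ := hn k hk
    by_cases hkt : k = t
    · subst hkt
      rw [Nat.testBit_of_two_pow_le_and_two_pow_add_one_gt hk1
        (by rwa [Nat.sub_add_cancel (by omega)])]
      simp
    · have hlt : k < t := lt_of_le_of_ne (U.le_max' k hk) hkt
      rw [Nat.testBit_lt_two_pow (hk2.trans_le (Nat.pow_le_pow_right two_pos (by omega)))]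
      simp [hkt]
  have hbit : m - 1 - (t - 1) = m - t := by omega
  refine sum_involution (fun i _ => i ^^^ 2 ^ (m - t)) (fun i _ => ?_) (fun i _ _ => ?_)
    (fun i hi => ?_) (fun i _ => Nat.xor_xor_cancel_right i _)
  · rw [Nat.xor_two_pow_div_two_pow (by omega)]
    simp_rw [← hbit, dyadicWalsh_xor_two_pow (show t - 1 < m by omega), prod_mul_distrib,
      prod_congr rfl hsign, prod_ite_eq' U t, if_pos ht]
    ring
  · intro h
    have := congrArg (i ^^^ ·) h
    simp only [Nat.xor_xor_cancel_left, Nat.xor_self] at this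
    exact pow_ne_zero _ two_ne_zero this
  · exact mem_range.2 (Nat.xor_lt_two_pow (mem_range.1 hi)
      (Nat.pow_lt_pow_right one_lt_two (by omega)))

theorem intervalIntegral_eq_sum_of_forall_mem_dyadicInterval {g : ℝ → ℝ} {v : ℕ → ℝ} {m : ℕ}
    (hg : ∀ i < 2 ^ m, ∀ x ∈ dyadicInterval m i, g x = v i) :
    ∫ x in (0 : ℝ)..1, g x = (∑ i ∈ range (2 ^ m), v i) / 2 ^ m := by
  set a : ℕ → ℝ := fun i => i / 2 ^ m
  have hle : ∀ i, a i ≤ a (i + 1) := fun i => by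
    simp only [a]; gcongr; simp
  have heq : ∀ i < 2 ^ m, Set.EqOn g (fun _ => v i) (Set.Ioo (a i) (a (i + 1))) :=
    fun i hi x hx => hg i hi x (by simpa [a, dyadicInterval] using hx)
  have hint : ∀ i < 2 ^ m, IntervalIntegrable g volume (a i) (a (i + 1)) := fun i hi =>
    intervalIntegrable_const.congr_uIoo (Set.uIoo_of_le (hle i) ▸ (heq i hi).symm)
  have h0 : a 0 = 0 := by simp [a]
  have h1 : a (2 ^ m) = 1 := by simp [a]
  rw [← h0, ← h1, ← intervalIntegral.sum_integral_adjacent_intervals hint, sum_div]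
  refine sum_congr rfl fun i hi => ?_
  rw [intervalIntegral.integral_congr_Ioo_of_le (hle i) (heq i (mem_range.1 hi)),
    intervalIntegral.integral_const, smul_eq_mul]
  simp only [a]
  push_cast
  ring

theorem le_essSup_of_forall_mem {α : Type*} [MeasurableSpace α] {μ : Measure α} {f : α → ℝ}
    {s : Set α} {c : ℝ} (hf : Filter.IsBoundedUnder (· ≤ ·) (ae μ) f) (hs : μ s ≠ 0)
    (h : ∀ x ∈ s, c ≤ f x) : c ≤ essSup f μ := by
  by_contra! hlt
  exact hs (measure_mono_null (fun x hx => not_lt.2 (h x hx))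
    (ae_iff.1 (ae_lt_of_essSup_lt hlt hf)))

theorem abs_le_essSupNorm01_of_eqOn_dyadicInterval {g : ℝ → ℝ} {C : ℝ} (hC : ∀ x, |g x| ≤ C)
    {m i : ℕ} (hi : i < 2 ^ m) {c : ℝ} (hg : ∀ x ∈ dyadicInterval m i, g x = c) :
    |c| ≤ essSupNorm01 g := by
  refine le_essSup_of_forall_mem (Filter.isBoundedUnder_of ⟨C, hC⟩) ?_
    fun x hx => hg x hx ▸ le_rfl
  rw [Measure.restrict_apply' measurableSet_Icc,
    Set.inter_eq_self_of_subset_left (dyadicInterval_subset_Icc hi), volume_dyadicInterval]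
  simp

theorem walsh_sidon_general (n : ℕ → ℕ) (hn : ∀ k, 1 ≤ k → 2^(k-1) ≤ n k ∧ n k < 2^k)
    (l m : ℕ) (p : ℕ → ℝ → ℝ)
    (hp : ∀ k, l+1 ≤ k → k ≤ m →
      ∃ a : ℕ → ℝ, p k = fun x => ∑ j ∈ Finset.range (2^l), a j * walsh j x) :
    ∑ k ∈ Finset.Icc (l+1) m, l1Norm01 (p k) ≤
      essSupNorm01 (fun x => ∑ k ∈ Finset.Icc (l+1) m, p k x * walsh (n k) x) := by
  choose! a ha using hp
  set K := Icc (l + 1) m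
  have hK : ∀ k ∈ K, l + 1 ≤ k ∧ k ≤ m := fun k hk => mem_Icc.1 hk
  set Q : ℕ → ℕ → ℝ := fun k b => ∑ j ∈ range (2 ^ l), a k j * dyadicWalsh l j b
  have hp_step : ∀ k ∈ K, ∀ i, ∀ x ∈ dyadicInterval m i, p k x = Q k (i / 2 ^ (m - l)) :=
    fun k hk i x hx => by
      rw [ha k (hK k hk).1 (hK k hk).2]
      exact sum_mul_walsh_eq_of_mem_dyadicInterval (by linarith [hK k hk]) _ hx
  have hf_bdd (x : ℝ) :
      |∑ k ∈ K, p k x * walsh (n k) x| ≤ ∑ k ∈ K, ∑ j ∈ range (2 ^ l), |a k j| :=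
    (abs_sum_mul_walsh_le K _ n x).trans <| sum_le_sum fun k hk => by
      rw [ha k (hK k hk).1 (hK k hk).2]
      exact abs_sum_mul_walsh_le _ _ id x
  have hn_K (k : ℕ) (hk : k ∈ K) : 2 ^ (k - 1) ≤ n k ∧ n k < 2 ^ k :=
    hn k (le_add_self.trans (hK k hk).1)
  have hriesz := sum_sum_abs_le_card_mul_of_orthogonal (s := range (2 ^ m))
    (χ := fun k i => dyadicWalsh m (n k) i) (q := fun i => i / 2 ^ (m - l))
    (fun _ _ _ _ => abs_dyadicWalsh _ _ _)
    (fun U hU hne c => sum_mul_prod_dyadicWalsh_eq_zero (fun k hk => hn_K k (hU hk)) hU hne c) Q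
    fun i hi => abs_le_essSupNorm01_of_eqOn_dyadicInterval hf_bdd (mem_range.1 hi) fun x hx =>
      sum_congr rfl fun k hk => by
        rw [hp_step k hk i x hx, walsh_eq_dyadicWalsh ((hn_K k hk).2.trans_le
          (Nat.pow_le_pow_right two_pos (hK k hk).2)) hx]
  calc ∑ k ∈ K, l1Norm01 (p k)
      = (∑ k ∈ K, ∑ i ∈ range (2 ^ m), |Q k (i / 2 ^ (m - l))|) / 2 ^ m := by
        rw [sum_div]
        exact sum_congr rfl fun k hk => intervalIntegral_eq_sum_of_forall_mem_dyadicInterval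
          fun i _ x hx => by rw [hp_step k hk i x hx]
    _ ≤ essSupNorm01 (fun x => ∑ k ∈ K, p k x * walsh (n k) x) := by
        rw [div_le_iff₀ (by positivity)]
        simpa [mul_comm] using hriesz

/-- Sidon-type inequality for the Walsh system. -/
theorem walsh_sidon (n : ℕ → ℕ) (hn : ∀ k, 1 ≤ k → 2^(k-1) ≤ n k ∧ n k < 2^k)
    (l m : ℕ) (hm : l + 1 ≤ m) (p : ℕ → ℝ → ℝ)
    (hp : ∀ k, l+1 ≤ k → k ≤ m →
      ∃ a : ℕ → ℝ, p k = fun x => ∑ j ∈ Finset.range (2^l), a j * walsh j x) :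
    ∑ k ∈ Finset.Icc (l+1) m, l1Norm01 (p k) ≤
      essSupNorm01 (fun x => ∑ k ∈ Finset.Icc (l+1) m, p k x * walsh (n k) x) :=
  walsh_sidon_general n hn l m p hp
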